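/- arXiv:1905.01815 — 5 statements merged into one kernel-verified Lean document; each statement's English description precedes it below -/
import Mathlib

section
/- Assume p ∤ s. Let φ be a nontrivial multiplicative character of F_q, φ* its restriction to F_r^*, and A = Σ_{x∈F_q^*} φ(x)·η(Tr_{q/r}(x+1)). Then |A| = √q if the multiplicative character η·conj(φ*) of F_r is nontrivial, and |A| = √q/√r if η·conj(φ*) is trivial. -/
open Finset

noncomputable def MulChar.restrictAlg {F K R : Type*} [Field F] [Field K]
    [CommMonoidWithZero R] [Algebra F K] (φ : MulChar K R) : MulChar F R where
  toFun := fun x => φ (algebraMap F K x)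
  map_one' := by simp
  map_mul' := fun x y => by simp [map_mul]
  map_nonunit' := fun a ha => by
    have h0 : a = 0 := by
      by_contra h
      exact ha (isUnit_iff_ne_zero.mpr h)
    subst h0
    show φ (algebraMap F K 0) = 0
    rw [map_zero]
    exact MulChar.map_nonunit φ not_isUnit_zero

@[simp] lemma MulChar.restrictAlg_apply {F K R : Type*} [Field F] [Field K]
    [CommMonoidWithZero R] [Algebra F K] (φ : MulChar K R) (x : F) :
    φ.restrictAlg x = φ (algebraMap F K x) := rfl

lemma abs_gaussSum_of_ne_one {F : Type*} [Field F] [Fintype F]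
    {χ : MulChar F ℂ} (hχ : χ ≠ 1) {ψ : AddChar F ℂ} (hψ : ψ.IsPrimitive) :
    ‖gaussSum χ ψ‖ = Real.sqrt (Fintype.card F) := by
  have hch : 0 < ringChar F := Nat.pos_of_ne_zero (CharP.ringChar_ne_zero_of_finite F)
  have h1 : (starRingEnd ℂ) (gaussSum χ ψ) = gaussSum χ⁻¹ ψ⁻¹ := by
    rw [gaussSum, gaussSum, map_sum]
    refine Finset.sum_congr rfl fun a _ => ?_
    rw [map_mul, AddChar.starComp_apply hch, starRingEnd_apply, MulChar.star_apply' χ a]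
  have h2 : gaussSum χ ψ * (starRingEnd ℂ) (gaussSum χ ψ) = (Fintype.card F : ℂ) := by
    rw [h1]; exact gaussSum_mul_gaussSum_eq_card hχ hψ
  have h3 := congrArg (‖·‖) h2
  rw [norm_mul, Complex.norm_conj, Complex.norm_natCast] at h3
  rw [← h3, Real.sqrt_mul_self (norm_nonneg _)]

/-- Assume `p ∤ s`.  Let `φ` be a nontrivial multiplicative character of
`F_q`, `φ*` its restriction to `F_r^*`, and
`A = Σ_{x∈F_q^*} φ(x)·η(Tr_{q/r}(x+1))`.  Then `|A| = √q` if the multiplicative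
character `η·conj(φ*)` of `F_r` is nontrivial, and `|A| = √q/√r` if `η·conj(φ*)` is
trivial. -/
theorem stmt4 (p t s : ℕ) [Fact p.Prime] (hp2 : Odd p) (ht : 0 < t) (hs : 0 < s)
    (hps : ¬ p ∣ s)
    (Fr Fq : Type) [Field Fr] [Fintype Fr] [DecidableEq Fr]
    [Field Fq] [Fintype Fq] [DecidableEq Fq] [Algebra Fr Fq]
    (hr : Fintype.card Fr = p ^ t) (hq : Fintype.card Fq = (p ^ t) ^ s)
    (φ : MulChar Fq ℂ) (hφ : φ ≠ 1)
    (A : ℂ)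
    (hA : A = ∑ x ∈ Finset.univ.filter (fun x : Fq => x ≠ 0),
      φ x * (quadraticChar Fr (Algebra.trace Fr Fq (x + 1)) : ℂ)) :
    ((∃ y : Fr, y ≠ 0 ∧
        (quadraticChar Fr y : ℂ) * (starRingEnd ℂ) (φ (algebraMap Fr Fq y)) ≠ 1) →
      ‖A‖ = Real.sqrt (((p : ℝ) ^ t) ^ s)) ∧
    ((∀ y : Fr, y ≠ 0 →
        (quadraticChar Fr y : ℂ) * (starRingEnd ℂ) (φ (algebraMap Fr Fq y)) = 1) →
      ‖A‖ = Real.sqrt (((p : ℝ) ^ t) ^ s) / Real.sqrt ((p : ℝ) ^ t)) := by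
  classical
  have hp : p.Prime := Fact.out
  -- characteristic of Fr is p
  have hrchar : ringChar Fr = p := by
    have hprime : (ringChar Fr).Prime := CharP.char_is_prime Fr (ringChar Fr)
    obtain ⟨n, hcard⟩ := FiniteField.card Fr (ringChar Fr)
    have hd : p ∣ ringChar Fr ^ (n : ℕ) := by
      rw [← hcard.2, hr]
      exact dvd_pow_self p ht.ne'
    exact ((Nat.prime_dvd_prime_iff_eq hp hprime).mp (hp.dvd_of_dvd_pow hd)).symm
  haveI hcharp : CharP Fr p := hrchar ▸ ringChar.charP Fr
  have hp2' : ringChar Fr ≠ 2 := by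
    rw [hrchar]
    rintro rfl
    exact (Nat.not_odd_iff_even.mpr even_two) hp2
  have hs0 : (s : Fr) ≠ 0 := fun h => hps ((CharP.cast_eq_zero_iff Fr p s).mp h)
  haveI : Module.Finite Fr Fq := Module.Finite.of_finite
  haveI : Algebra.IsAlgebraic Fr Fq := Algebra.IsAlgebraic.of_finite Fr Fq
  -- finrank
  have hrank : Module.finrank Fr Fq = s := by
    have hcard : Fintype.card Fq = Fintype.card Fr ^ Module.finrank Fr Fq := Module.card_eq_pow_finrank
    rw [hq, hr] at hcard
    exact (Nat.pow_right_injective (Nat.one_lt_pow ht.ne' hp.one_lt) hcard).symm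
  -- the additive characters
  set ψ : AddChar Fr ℂ := AddChar.FiniteField.primitiveChar_to_Complex Fr with hψdef
  have hψprim : ψ.IsPrimitive := AddChar.FiniteField.primitiveChar_to_Complex_isPrimitive Fr
  have hψ1 : ψ ≠ 1 := by
    have := hψprim one_ne_zero
    rwa [AddChar.mulShift_one] at this
  set Ψ : AddChar Fq ℂ := ψ.compAddMonoidHom (Algebra.trace Fr Fq).toAddMonoidHom with hΨdef
  have hΨapp : ∀ y : Fq, Ψ y = ψ (Algebra.trace Fr Fq y) := fun y => rfl
  have hΨ1 : Ψ ≠ 1 := by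
    obtain ⟨a, ha⟩ := AddChar.ne_one_iff.mp hψ1
    obtain ⟨x, hx⟩ := Algebra.trace_surjective Fr Fq a
    rw [AddChar.ne_one_iff]
    exact ⟨x, by rw [hΨapp, hx]; simpa using ha⟩
  have hΨprim : Ψ.IsPrimitive := AddChar.IsPrimitive.of_ne_one hΨ1
  -- the multiplicative characters
  set η' : MulChar Fr ℂ := (quadraticChar Fr).ringHomComp (Int.castRingHom ℂ) with hη'def
  have hη'app : ∀ y : Fr, η' y = ((quadraticChar Fr y : ℤ) : ℂ) := fun y => rfl
  have hη'ne : η' ≠ 1 :=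
    (MulChar.ringHomComp_ne_one_iff (Int.cast_injective)).mpr (quadraticChar_ne_one hp2')
  set φs : MulChar Fr ℂ := φ.restrictAlg with hφsdef
  set χ₀ : MulChar Fr ℂ := η' * star φs with hχ₀def
  have hχ₀app : ∀ y : Fr,
      χ₀ y = ((quadraticChar Fr y : ℤ) : ℂ) * (starRingEnd ℂ) (φ (algebraMap Fr Fq y)) := by
    intro y
    rw [hχ₀def, MulChar.coeToFun_mul, Pi.mul_apply, MulChar.star_apply, hη'app,
      MulChar.restrictAlg_apply, starRingEnd_apply]
  -- conjugate of φ value is its inverse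
  have hconj : ∀ x : Fq, x ≠ 0 → (starRingEnd ℂ) (φ x) * φ x = 1 := by
    intro x hx
    rw [starRingEnd_apply, MulChar.star_apply' φ x]
    calc φ⁻¹ x * φ x = (φ⁻¹ * φ) x := by rw [MulChar.coeToFun_mul, Pi.mul_apply]
      _ = (1 : MulChar Fq ℂ) x := by rw [inv_mul_cancel]
      _ = 1 := MulChar.one_apply (isUnit_iff_ne_zero.mpr hx)
  -- A as a sum over all of Fq
  have hA' : A = ∑ x : Fq, φ x * η' (Algebra.trace Fr Fq (x + 1)) := by
    rw [hA, Finset.sum_filter]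
    refine Finset.sum_congr rfl fun x _ => ?_
    rw [hη'app]
    split_ifs with h
    · rfl
    · push_neg at h
      subst h
      rw [MulChar.map_zero, zero_mul]
  -- Fourier expansion of η'
  have hfour : ∀ z : Fr, ∑ c : Fr, η' c * ψ (c * z) = η' z * gaussSum η' ψ := by
    intro z
    rcases eq_or_ne z 0 with rfl | hz
    · simp only [mul_zero, AddChar.map_zero_eq_one, mul_one]
      rw [MulChar.sum_eq_zero_of_ne_one hη'ne, MulChar.map_zero, zero_mul]
    · have hsq : η' z * η' z = 1 := by
        rw [hη'app, ← Int.cast_mul, ← sq, quadraticChar_sq_one hz, Int.cast_one]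
      have h1 := gaussSum_mulShift η' ψ (Units.mk0 z hz)
      simp only [Units.val_mk0] at h1
      have h1' : gaussSum η' (AddChar.mulShift ψ z) = η' z * gaussSum η' ψ := by
        calc gaussSum η' (AddChar.mulShift ψ z)
            = (η' z * η' z) * gaussSum η' (AddChar.mulShift ψ z) := by rw [hsq, one_mul]
          _ = η' z * (η' z * gaussSum η' (AddChar.mulShift ψ z)) := by ring
          _ = η' z * gaussSum η' ψ := by rw [h1]
      rw [← h1', gaussSum]
      exact Finset.sum_congr rfl fun c _ => by rw [AddChar.mulShift_apply, mul_comm c z]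
  -- trace identities
  have htr : ∀ (c : Fr) (y : Fq),
      Algebra.trace Fr Fq (algebraMap Fr Fq c * y) = c * Algebra.trace Fr Fq y := by
    intro c y
    rw [← Algebra.smul_def, map_smul, smul_eq_mul]
  have htralg : ∀ c : Fr, Algebra.trace Fr Fq (algebraMap Fr Fq c) = (s : Fr) * c := by
    intro c
    rw [Algebra.trace_algebraMap, hrank, nsmul_eq_mul]
  set ψs : AddChar Fr ℂ := AddChar.mulShift ψ ((s : ℕ) : Fr) with hψsdef
  have hψs1 : ψs ≠ 1 := hψprim hs0
  have hψsprim : ψs.IsPrimitive := AddChar.IsPrimitive.of_ne_one hψs1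
  -- the key identity
  have key : gaussSum η' ψ * A = gaussSum φ Ψ * gaussSum χ₀ ψs := by
    rw [hA', Finset.mul_sum]
    have lhs : ∀ x : Fq, gaussSum η' ψ * (φ x * η' (Algebra.trace Fr Fq (x + 1)))
        = ∑ c : Fr, η' c * φ x * ψ (c * Algebra.trace Fr Fq (x + 1)) := by
      intro x
      rw [show gaussSum η' ψ * (φ x * η' (Algebra.trace Fr Fq (x + 1)))
          = φ x * (η' (Algebra.trace Fr Fq (x + 1)) * gaussSum η' ψ) by ring, ← hfour,
        Finset.mul_sum]
      exact Finset.sum_congr rfl fun c _ => by ring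
    calc ∑ x : Fq, gaussSum η' ψ * (φ x * η' (Algebra.trace Fr Fq (x + 1)))
        = ∑ x : Fq, ∑ c : Fr, η' c * φ x * ψ (c * Algebra.trace Fr Fq (x + 1)) :=
          Finset.sum_congr rfl fun x _ => lhs x
      _ = ∑ c : Fr, ∑ x : Fq, η' c * φ x * ψ (c * Algebra.trace Fr Fq (x + 1)) :=
          Finset.sum_comm
      _ = ∑ c : Fr, gaussSum φ Ψ * (χ₀ c * ψs c) := by
          refine Finset.sum_congr rfl fun c _ => ?_
          rcases eq_or_ne c 0 with rfl | hc
          · simp only [MulChar.map_zero, zero_mul, mul_zero, zero_mul,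
              Finset.sum_const_zero]
          · -- c ≠ 0
            have hic : algebraMap Fr Fq c ≠ 0 := by
              simpa using (map_ne_zero_iff _ (algebraMap Fr Fq).injective).mpr hc
            have step1 : ∀ x : Fq, η' c * φ x * ψ (c * Algebra.trace Fr Fq (x + 1))
                = η' c * ψ ((s : Fr) * c) * (φ x * Ψ (algebraMap Fr Fq c * x)) := by
              intro x
              rw [← htr c (x + 1), mul_add, mul_one, map_add, AddChar.map_add_eq_mul,
                htralg, hΨapp]
              ring
            rw [Finset.sum_congr rfl fun x _ => step1 x, ← Finset.mul_sum]
            have hgs : ∑ x : Fq, φ x * Ψ (algebraMap Fr Fq c * x)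
                = (starRingEnd ℂ) (φ (algebraMap Fr Fq c)) * gaussSum φ Ψ := by
              have h2 := gaussSum_mulShift φ Ψ (Units.mk0 _ hic)
              simp only [Units.val_mk0] at h2
              have h3 : gaussSum φ (AddChar.mulShift Ψ (algebraMap Fr Fq c))
                  = ∑ x : Fq, φ x * Ψ (algebraMap Fr Fq c * x) := by
                rw [gaussSum]
                exact Finset.sum_congr rfl fun x _ => by rw [AddChar.mulShift_apply]
              rw [← h3, ← h2, ← mul_assoc, hconj _ hic, one_mul]
            rw [hgs, hχ₀app, hη'app, hψsdef, AddChar.mulShift_apply]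
            ring
      _ = gaussSum φ Ψ * gaussSum χ₀ ψs := by rw [← Finset.mul_sum]; rfl
  -- absolute values
  have habsη : ‖gaussSum η' ψ‖ = Real.sqrt ((p : ℝ) ^ t) := by
    rw [abs_gaussSum_of_ne_one hη'ne hψprim, hr]
    norm_num
  have habsφ : ‖gaussSum φ Ψ‖ = Real.sqrt (((p : ℝ) ^ t) ^ s) := by
    rw [abs_gaussSum_of_ne_one hφ hΨprim, hq]
    norm_num
  have habsηpos : 0 < ‖gaussSum η' ψ‖ := by
    rw [habsη]
    apply Real.sqrt_pos.mpr
    have hppos : (0:ℝ) < (p:ℝ) := by exact_mod_cast hp.pos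
    positivity
  have keyabs := congrArg (‖·‖) key
  rw [norm_mul, norm_mul, habsη, habsφ] at keyabs
  have hsqrtne : Real.sqrt ((p : ℝ) ^ t) ≠ 0 := by
    rw [← habsη]; exact habsηpos.ne'
  constructor
  · rintro ⟨y, hy0, hy⟩
    have hχ₀ne : χ₀ ≠ 1 := by
      intro h
      apply hy
      rw [← hχ₀app, h, MulChar.one_apply (isUnit_iff_ne_zero.mpr hy0)]
    have habsχ : ‖gaussSum χ₀ ψs‖ = Real.sqrt ((p : ℝ) ^ t) := by
      rw [abs_gaussSum_of_ne_one hχ₀ne hψsprim, hr]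
      norm_num
    rw [habsχ, mul_comm (Real.sqrt (((p:ℝ)^t)^s))] at keyabs
    exact mul_left_cancel₀ hsqrtne keyabs
  · intro hy
    have hcase : ∀ c : Fr, c ≠ 0 → χ₀ c = 1 := by
      intro c hc
      rw [hχ₀app]
      exact hy c hc
    have hzero : ∑ c : Fr, ψs c = 0 := AddChar.sum_eq_zero_of_ne_one hψs1
    have hgsum : gaussSum χ₀ ψs = -1 := by
      have e1 : gaussSum χ₀ ψs = ∑ c ∈ Finset.univ.erase (0 : Fr), ψs c := by
        rw [gaussSum, ← Finset.sum_erase (a := (0 : Fr)) Finset.univ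
          (f := fun c : Fr => χ₀ c * ψs c)
          (by show χ₀ 0 * ψs 0 = 0; rw [MulChar.map_zero, zero_mul])]
        exact Finset.sum_congr rfl fun c hc => by
          rw [hcase c (Finset.ne_of_mem_erase hc), one_mul]
      have e2 : ψs 0 + ∑ c ∈ Finset.univ.erase (0 : Fr), ψs c = 0 := by
        rw [Finset.add_sum_erase _ _ (Finset.mem_univ 0)]
        exact hzero
      rw [AddChar.map_zero_eq_one] at e2
      rw [e1]
      linear_combination e2
    have habs1 : ‖(-1 : ℂ)‖ = 1 := by simp
    rw [hgsum, habs1, mul_one] at keyabs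
    rw [eq_div_iff hsqrtne]
    linear_combination keyabs
end

section
/- Let φ be a nontrivial multiplicative character of F_q and φ* its restriction to F_r^*. Then Σ_{x∈F_q^*, Tr_{q/r}(x+1)=0} φ(x) = (1/r)·G_q(φ, χ)·G_r(conj(φ*), χ*), where χ* is the restriction of χ to F_r. -/
/-!
Write the canonical character of `F_q` as `χ = ψ ∘ Tr_{q/r}`, where `ψ` is the canonical
character of `F_r`; `ψ` is primitive, so `r⁻¹ ∑_{y ∈ F_r} χ(y z)` is the indicator of
`Tr_{q/r}(z) = 0`. Inserting this indicator with `z = x + 1` and swapping the sums, the term of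
`y` becomes `χ(y)` times the Gauss sum of `φ` against `x ↦ χ(y x)`, which is `φ̄(y) G_q(φ, χ)`,
also for `y = 0`, where both sides vanish because `φ` is nontrivial.
-/

open Finset

namespace AddChar

variable {R : Type*} [CommMonoid R]

noncomputable def compTrace {K : Type*} (L : Type*) [CommRing K] [CommRing L] [Algebra K L]
    (ψ : AddChar K R) : AddChar L R :=
  ψ.compAddMonoidHom (Algebra.trace K L).toAddMonoidHom

@[simp]
lemma compTrace_apply {K L : Type*} [CommRing K] [CommRing L] [Algebra K L] (ψ : AddChar K R)
    (x : L) : ψ.compTrace L x = ψ (Algebra.trace K L x) := rfl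

lemma compTrace_compTrace {K L M : Type*} [Field K] [Field L] [Field M] [Algebra K L]
    [Algebra K M] [Algebra L M] [IsScalarTower K L M] [FiniteDimensional K L]
    [FiniteDimensional L M] (ψ : AddChar K R) :
    (ψ.compTrace L).compTrace M = ψ.compTrace M := by
  ext x
  simp only [compTrace_apply, Algebra.trace_trace]

lemma IsPrimitive.compTrace {K L : Type*} [Field K] [Field L] [Algebra K L]
    [FiniteDimensional K L] [Algebra.IsSeparable K L] {ψ : AddChar K R} (hψ : ψ.IsPrimitive) :
    (ψ.compTrace L).IsPrimitive :=
  .of_ne_one fun h ↦ hψ one_ne_zero <| by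
    rw [mulShift_one]
    exact compAddMonoidHom_injective_left _ (Algebra.trace_surjective K L) h

lemma sum_compTrace_algebraMap_mul {K L R : Type*} [CommRing K] [Fintype K] [DecidableEq K]
    [CommRing L] [Algebra K L] [CommRing R] [IsDomain R] {ψ : AddChar K R} (hψ : ψ.IsPrimitive)
    (z : L) :
    ∑ y : K, ψ.compTrace L (algebraMap K L y * z) =
      if Algebra.trace K L z = 0 then (Fintype.card K : R) else 0 := by
  simp_rw [compTrace_apply, ← Algebra.smul_def, map_smul, smul_eq_mul, sum_mulShift _ hψ]
  push_cast
  rfl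

end AddChar

lemma gaussSum_mulShift_of_ne_one {F R : Type*} [Field F] [Fintype F] [CommRing R] [IsDomain R]
    {φ : MulChar F R} (hφ : φ ≠ 1) (ψ : AddChar F R) (a : F) :
    gaussSum φ (ψ.mulShift a) = φ⁻¹ a * gaussSum φ ψ := by
  rcases eq_or_ne a 0 with rfl | ha
  · rw [AddChar.mulShift_zero, gaussSum_one_right hφ, MulChar.map_zero, zero_mul]
  · exact gaussSum_mulShift_eq φ ψ (Units.mk0 a ha)

open AddChar in
theorem card_mul_sum_filter_trace_add_one_eq_zero {K L R : Type*} [Field K] [Fintype K]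
    [DecidableEq K] [Field L] [Fintype L] [Algebra K L] [CommRing R] [IsDomain R]
    {ψ : AddChar K R} (hψ : ψ.IsPrimitive) {φ : MulChar L R} (hφ : φ ≠ 1) :
    (Fintype.card K : R) * ∑ x ∈ univ.filter (fun x : L ↦ Algebra.trace K L (x + 1) = 0), φ x =
      gaussSum φ (ψ.compTrace L) *
        ∑ y : K, φ⁻¹ (algebraMap K L y) * ψ.compTrace L (algebraMap K L y) := by
  set χ := ψ.compTrace L
  calc (Fintype.card K : R) * ∑ x ∈ univ.filter (fun x : L ↦ Algebra.trace K L (x + 1) = 0), φ x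
      = ∑ x : L, φ x * ∑ y : K, χ (algebraMap K L y * (x + 1)) := by
        simp_rw [χ, sum_compTrace_algebraMap_mul hψ, sum_filter, mul_sum, mul_ite, mul_zero,
          mul_comm]
    _ = ∑ y : K, gaussSum φ (χ.mulShift (algebraMap K L y)) * χ (algebraMap K L y) := by
        simp_rw [mul_sum, gaussSum, sum_mul, mulShift_apply, mul_add, mul_one, map_add_eq_mul,
          mul_assoc]
        exact sum_comm
    _ = gaussSum φ χ * ∑ y : K, φ⁻¹ (algebraMap K L y) * χ (algebraMap K L y) := by
        simp_rw [gaussSum_mulShift_of_ne_one hφ, mul_sum]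
        exact sum_congr rfl fun _ _ ↦ by ring

open AddChar in
theorem stmt5_general (p t : ℕ) [Fact p.Prime]
    (Fr Fq : Type) [Field Fr] [Fintype Fr] [DecidableEq Fr]
    [Field Fq] [Fintype Fq] [DecidableEq Fq]
    [Algebra (ZMod p) Fr] [Algebra (ZMod p) Fq] [Algebra Fr Fq]
    [IsScalarTower (ZMod p) Fr Fq]
    (hr : Fintype.card Fr = p ^ t)
    (χ : Fq → ℂ)
    (hχ : ∀ x : Fq, χ x = Complex.exp (2 * Real.pi * Complex.I *
      ((Algebra.trace (ZMod p) Fq x).val : ℂ) / (p : ℂ)))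
    (φ : MulChar Fq ℂ) (hφ : φ ≠ 1) :
    ∑ x ∈ Finset.univ.filter
        (fun x : Fq => x ≠ 0 ∧ Algebra.trace Fr Fq (x + 1) = 0), φ x =
      (1 / ((p : ℂ) ^ t)) *
        (∑ x ∈ Finset.univ.filter (fun x : Fq => x ≠ 0), φ x * χ x) *
        (∑ y ∈ Finset.univ.filter (fun y : Fr => y ≠ 0),
          (starRingEnd ℂ) (φ (algebraMap Fr Fq y)) * χ (algebraMap Fr Fq y)) := by
  have : Module.Finite (ZMod p) Fr := .of_finite
  have : Module.Finite Fr Fq := .of_finite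
  let ψ : AddChar Fr ℂ := (ZMod.stdAddChar (N := p)).compTrace Fr
  have hχψ : χ = ψ.compTrace Fq := by
    ext x
    rw [compTrace_compTrace, hχ, compTrace_apply, ZMod.stdAddChar_apply, ZMod.toCircle_apply]
  subst hχψ
  have hφ0 {x : Fq} (hx : φ x ≠ 0) : x ≠ 0 := by rintro rfl; exact hx (MulChar.map_zero φ)
  have hlhs : ∑ x ∈ univ.filter (fun x : Fq ↦ x ≠ 0 ∧ Algebra.trace Fr Fq (x + 1) = 0), φ x =
      ∑ x ∈ univ.filter (fun x : Fq ↦ Algebra.trace Fr Fq (x + 1) = 0), φ x := by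
    rw [← filter_filter, filter_comm, sum_filter_of_ne fun x _ hx ↦ hφ0 hx]
  have hgauss : ∑ x ∈ univ.filter (fun x : Fq ↦ x ≠ 0), φ x * ψ.compTrace Fq x =
      gaussSum φ (ψ.compTrace Fq) :=
    sum_filter_of_ne fun x _ hx ↦ hφ0 (left_ne_zero_of_mul hx)
  have hres : ∑ y ∈ univ.filter (fun y : Fr ↦ y ≠ 0),
      (starRingEnd ℂ) (φ (algebraMap Fr Fq y)) * ψ.compTrace Fq (algebraMap Fr Fq y) =
      ∑ y : Fr, φ⁻¹ (algebraMap Fr Fq y) * ψ.compTrace Fq (algebraMap Fr Fq y) := by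
    simp_rw [starRingEnd_apply, MulChar.star_apply']
    refine sum_filter_of_ne fun y _ hy ↦ ?_
    rintro rfl
    simp only [map_zero, MulChar.map_zero, zero_mul, ne_eq, not_true_eq_false] at hy
  have hr' : (p : ℂ) ^ t = Fintype.card Fr := by rw [hr]; norm_cast
  have hcard : (Fintype.card Fr : ℂ) ≠ 0 := Nat.cast_ne_zero.2 Fintype.card_ne_zero
  rw [hlhs, hgauss, hres, hr', mul_assoc, ← card_mul_sum_filter_trace_add_one_eq_zero
    (ψ := ψ) (ZMod.isPrimitive_stdAddChar p).compTrace hφ]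
  field_simp

/-- Let `φ` be a nontrivial multiplicative character of `F_q` and `φ*` its
restriction to `F_r^*`.  Then
`Σ_{x∈F_q^*, Tr_{q/r}(x+1)=0} φ(x) = (1/r)·G_q(φ, χ)·G_r(conj(φ*), χ*)`,
where `χ*` is the restriction of `χ` to `F_r`. -/
theorem stmt5 (p t s : ℕ) [Fact p.Prime] (hp2 : Odd p) (ht : 0 < t) (hs : 0 < s)
    (hps : ¬ p ∣ s)
    (Fr Fq : Type) [Field Fr] [Fintype Fr] [DecidableEq Fr]
    [Field Fq] [Fintype Fq] [DecidableEq Fq]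
    [Algebra (ZMod p) Fr] [Algebra (ZMod p) Fq] [Algebra Fr Fq]
    [IsScalarTower (ZMod p) Fr Fq]
    (hr : Fintype.card Fr = p ^ t) (hq : Fintype.card Fq = (p ^ t) ^ s)
    (χ : Fq → ℂ)
    (hχ : ∀ x : Fq, χ x = Complex.exp (2 * Real.pi * Complex.I *
      ((Algebra.trace (ZMod p) Fq x).val : ℂ) / (p : ℂ)))
    (φ : MulChar Fq ℂ) (hφ : φ ≠ 1) :
    ∑ x ∈ Finset.univ.filter
        (fun x : Fq => x ≠ 0 ∧ Algebra.trace Fr Fq (x + 1) = 0), φ x =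
      (1 / ((p : ℂ) ^ t)) *
        (∑ x ∈ Finset.univ.filter (fun x : Fq => x ≠ 0), φ x * χ x) *
        (∑ y ∈ Finset.univ.filter (fun y : Fr => y ≠ 0),
          (starRingEnd ℂ) (φ (algebraMap Fr Fq y)) * χ (algebraMap Fr Fq y)) :=
  stmt5_general p t Fr Fq hr χ hχ φ hφ
end

section
/- The set D = {x ∈ F_{q^2} : η(Tr_{q/r}(x^{q+1})) = −1} has cardinality #D = q(q+1)(r−1)/(2r). -/
open Finset

/-- Fibers of a surjective additive hom between finite groups all have the same size. -/
lemma fiber_card_mul_aux {A B : Type*} [AddCommGroup A] [Fintype A] [DecidableEq A]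
    [AddCommGroup B] [Fintype B] [DecidableEq B]
    (f : A →+ B) (hf : Function.Surjective f) (c : B) :
    (univ.filter (fun a => f a = c)).card * Fintype.card B = Fintype.card A := by
  have hconst : ∀ d : B, (univ.filter (fun a => f a = d)).card
      = (univ.filter (fun a => f a = c)).card := by
    intro d
    obtain ⟨a₀, ha₀⟩ := hf (d - c)
    apply Finset.card_nbij' (fun a => a - a₀) (fun b => b + a₀)
    · intro a ha
      simp only [Finset.mem_coe, mem_filter, mem_univ, true_and] at ha ⊢
      rw [map_sub, ha, ha₀]; abel
    · intro b hb
      simp only [Finset.mem_coe, mem_filter, mem_univ, true_and] at hb ⊢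
      rw [map_add, hb, ha₀]; abel
    · intro a _; exact sub_add_cancel a a₀
    · intro b _; exact add_sub_cancel_right b a₀
  have hsum : Fintype.card A = ∑ d : B, (univ.filter (fun a => f a = d)).card :=
    Finset.card_eq_sum_card_fiberwise (fun a _ => mem_univ (f a))
  rw [hsum, Finset.sum_congr rfl (fun d _ => hconst d), Finset.sum_const, card_univ,
    smul_eq_mul, mul_comm]

/-- The number of non-squares in a finite field of odd characteristic. -/
lemma count_quadChar_neg_one_aux {F : Type*} [Field F] [Fintype F] [DecidableEq F]
    (hF : ringChar F ≠ 2) :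
    (univ.filter (fun c : F => quadraticChar F c = -1)).card * 2 + 1 = Fintype.card F := by
  set S1 := univ.filter (fun c : F => quadraticChar F c = 1) with hS1
  set S2 := univ.filter (fun c : F => quadraticChar F c = -1) with hS2
  have hsum := quadraticChar_sum_zero hF
  have hdiff : (S1.card : ℤ) - S2.card = ∑ a : F, quadraticChar F a := by
    rw [hS1, hS2, Finset.card_filter, Finset.card_filter]
    push_cast
    rw [← Finset.sum_sub_distrib]
    refine Finset.sum_congr rfl fun a _ => ?_
    rcases eq_or_ne a 0 with rfl | ha
    · simp [quadraticChar_zero]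
    · rcases quadraticChar_dichotomy ha with h | h <;> simp [h]
  have hcard : S1.card = S2.card := by
    have h0 : (S1.card : ℤ) - S2.card = 0 := by rw [hdiff, hsum]
    exact_mod_cast sub_eq_zero.mp h0
  have hzero : univ.filter (fun c : F => quadraticChar F c = 0) = {0} := by
    ext a; simp [quadraticChar_eq_zero_iff, quadraticCharFun_eq_zero_iff]
  have hne : univ.filter (fun c : F => ¬ quadraticChar F c = 0) = S1 ∪ S2 := by
    ext a
    simp only [mem_filter, mem_univ, true_and, mem_union, hS1, hS2]
    constructor
    · intro h
      exact quadraticChar_dichotomy (fun h0 => h (by rw [h0, quadraticChar_zero]))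
    · rintro (h | h) <;> rw [h] <;> decide
  have hdisj : Disjoint S1 S2 := by
    rw [Finset.disjoint_left]
    intro a ha1 ha2
    rw [hS1, mem_filter] at ha1
    rw [hS2, mem_filter] at ha2
    rw [ha1.2] at ha2
    exact absurd ha2.2 (by decide)
  have htot := Finset.card_filter_add_card_filter_not
    (s := (univ : Finset F)) (p := fun c : F => quadraticChar F c = 0)
  rw [hzero, hne, Finset.card_union_of_disjoint hdisj, Finset.card_singleton,
    Finset.card_univ] at htot
  omega

/-- The set `D = {x ∈ F_{q^2} : η(Tr_{q/r}(x^{q+1})) = −1}` has cardinality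
`#D = q(q+1)(r−1)/(2r)`.  Here `N : F_{q^2} → F_q` is the (uniquely determined) map with
`algebraMap (N x) = x^{q+1}`, recording that `x^{q+1} ∈ F_q`. -/
theorem stmt7 (p t s : ℕ) [Fact p.Prime] (hp2 : Odd p) (ht : 0 < t) (hs : 0 < s)
    (Fr Fq Fq2 : Type) [Field Fr] [Fintype Fr] [DecidableEq Fr]
    [Field Fq] [Fintype Fq] [Field Fq2] [Fintype Fq2] [DecidableEq Fq2]
    [Algebra Fr Fq] [Algebra Fq Fq2]
    (hr : Fintype.card Fr = p ^ t) (hq : Fintype.card Fq = (p ^ t) ^ s)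
    (hq2 : Fintype.card Fq2 = ((p ^ t) ^ s) ^ 2)
    (N : Fq2 → Fq) (hN : ∀ x : Fq2, algebraMap Fq Fq2 (N x) = x ^ (Fintype.card Fq + 1))
    (D : Finset Fq2)
    (hD : D = Finset.univ.filter
      (fun x : Fq2 => quadraticChar Fr (Algebra.trace Fr Fq (N x)) = -1)) :
    (D.card : ℚ) = ((p : ℚ) ^ t) ^ s * (((p : ℚ) ^ t) ^ s + 1) * ((p : ℚ) ^ t - 1) /
      (2 * (p : ℚ) ^ t) := by
  classical
  set r := Fintype.card Fr with hrdef
  set q := Fintype.card Fq with hqdef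
  have hp : p.Prime := Fact.out
  have hinj : Function.Injective (algebraMap Fq Fq2) := (algebraMap Fq Fq2).injective
  -- characteristic not 2
  have hchar : ringChar Fr ≠ 2 := by
    intro h
    have := FiniteField.even_card_of_char_two h
    rw [← hrdef, hr] at this
    have : ¬ Odd (p ^ t) := by
      rw [Nat.odd_iff]; omega
    exact this (hp2.pow)
  -- trace is surjective
  haveI : Module.Finite Fr Fq := Module.Finite.of_finite
  haveI : FiniteDimensional Fr Fq := inferInstance
  have htr_surj : Function.Surjective (Algebra.trace Fr Fq) := Algebra.trace_surjective Fr Fq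
  -- trace fibers
  have htr_fiber : ∀ c : Fr,
      (univ.filter (fun y : Fq => Algebra.trace Fr Fq y = c)).card * r = q := by
    intro c
    exact fiber_card_mul_aux (Algebra.trace Fr Fq).toAddMonoidHom htr_surj c
  -- norm fibers: each nonzero fiber has exactly q + 1 elements
  have hq1 : 1 ≤ q := Fintype.card_pos
  have hbound : ∀ y : Fq, (univ.filter (fun x : Fq2 => N x = y)).card ≤ q + 1 := by
    intro y
    set f : Polynomial Fq2 := Polynomial.X ^ (q + 1) - Polynomial.C (algebraMap Fq Fq2 y)
      with hf
    have hfne : f ≠ 0 := (Polynomial.monic_X_pow_sub_C _ (Nat.succ_ne_zero q)).ne_zero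
    have hsub : univ.filter (fun x : Fq2 => N x = y) ⊆ f.roots.toFinset := by
      intro x hx
      rw [mem_filter] at hx
      rw [Multiset.mem_toFinset, Polynomial.mem_roots hfne]
      exact Polynomial.IsRoot.def.mpr (by
        simp [hf, Polynomial.eval_sub, ← hx.2, hN x])
    calc (univ.filter (fun x : Fq2 => N x = y)).card
        ≤ f.roots.toFinset.card := Finset.card_le_card hsub
      _ ≤ Multiset.card f.roots := Multiset.toFinset_card_le _
      _ ≤ f.natDegree := Polynomial.card_roots' f
      _ = q + 1 := by rw [hf, Polynomial.natDegree_X_pow_sub_C]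
  have hN0 : ∀ x : Fq2, N x = 0 ↔ x = 0 := by
    intro x
    constructor
    · intro h
      have := hN x
      rw [h, map_zero] at this
      exact pow_eq_zero_iff (Nat.succ_ne_zero q) |>.mp this.symm
    · intro h
      apply hinj
      rw [hN x, h, map_zero, zero_pow (Nat.succ_ne_zero q)]
  have hfiber0 : (univ.filter (fun x : Fq2 => N x = 0)).card = 1 := by
    have : univ.filter (fun x : Fq2 => N x = 0) = {0} := by
      ext x; simp [hN0 x]
    rw [this, Finset.card_singleton]
  have hsumall : ∑ y : Fq, (univ.filter (fun x : Fq2 => N x = y)).card = q ^ 2 := by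
    rw [← Finset.card_eq_sum_card_fiberwise (fun x _ => mem_univ (N x)), Finset.card_univ,
      hq2, hq]
  have hfiber : ∀ y : Fq, y ≠ 0 →
      (univ.filter (fun x : Fq2 => N x = y)).card = q + 1 := by
    intro y hy
    by_contra hne
    have hlt : (univ.filter (fun x : Fq2 => N x = y)).card < q + 1 :=
      lt_of_le_of_ne (hbound y) hne
    have hsplit : ∑ z : Fq, (univ.filter (fun x : Fq2 => N x = z)).card
        = (univ.filter (fun x : Fq2 => N x = 0)).card
          + ∑ z ∈ univ.erase 0, (univ.filter (fun x : Fq2 => N x = z)).card := by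
      rw [← Finset.add_sum_erase _ _ (mem_univ (0 : Fq))]
    have hstrict : ∑ z ∈ univ.erase 0, (univ.filter (fun x : Fq2 => N x = z)).card
        < ∑ _z ∈ (univ : Finset Fq).erase 0, (q + 1) := by
      exact Finset.sum_lt_sum (fun z _ => hbound z) ⟨y, Finset.mem_erase.mpr ⟨hy, mem_univ y⟩, hlt⟩
    rw [Finset.sum_const, smul_eq_mul, Finset.card_erase_of_mem (mem_univ _),
      Finset.card_univ, ← hqdef] at hstrict
    rw [hsplit, hfiber0] at hsumall
    have hqq : q ^ 2 = (q - 1) * (q + 1) + 1 := by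
      obtain ⟨q', hq'⟩ := Nat.exists_eq_add_of_le hq1
      rw [hq', Nat.add_sub_cancel_left]
      ring
    omega
  -- count of elements of Fr with quadratic character -1
  set T := univ.filter (fun c : Fr => quadraticChar Fr c = -1) with hT
  have hTcard : T.card * 2 + 1 = r := count_quadChar_neg_one_aux hchar
  -- the set S of y in Fq with character of trace = -1
  set S := univ.filter (fun y : Fq => quadraticChar Fr (Algebra.trace Fr Fq y) = -1) with hS
  have hScard : S.card * r = T.card * q := by
    have h1 : S.card = ∑ c ∈ T, (S.filter (fun y => Algebra.trace Fr Fq y = c)).card :=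
      Finset.card_eq_sum_card_fiberwise (by
        intro y hy
        simp only [Finset.mem_coe, hS, mem_filter] at hy
        rw [Finset.mem_coe, hT, mem_filter]
        exact ⟨mem_univ _, hy.2⟩)
    have h2 : ∀ c ∈ T, (S.filter (fun y => Algebra.trace Fr Fq y = c))
        = univ.filter (fun y : Fq => Algebra.trace Fr Fq y = c) := by
      intro c hc
      rw [hT, mem_filter] at hc
      ext y
      simp only [hS, Finset.filter_filter, mem_filter, mem_univ, true_and]
      constructor
      · exact fun h => h.2
      · intro h; exact ⟨by rw [h]; exact hc.2, h⟩
    rw [h1, Finset.sum_congr rfl (fun c hc => congrArg Finset.card (h2 c hc)), Finset.sum_mul]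
    rw [Finset.sum_congr rfl (fun c _ => htr_fiber c), Finset.sum_const, smul_eq_mul]
  -- elements of S are nonzero
  have hSne : ∀ y ∈ S, y ≠ 0 := by
    intro y hy h0
    rw [hS, mem_filter, h0, map_zero, quadraticChar_zero] at hy
    exact absurd hy.2 (by decide)
  -- D decomposes along N into fibers over S
  have hDcard : D.card = S.card * (q + 1) := by
    have h1 : D.card = ∑ y ∈ S, (D.filter (fun x => N x = y)).card :=
      Finset.card_eq_sum_card_fiberwise (by
        intro x hx
        simp only [Finset.mem_coe, hD, mem_filter] at hx
        rw [Finset.mem_coe, hS, mem_filter]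
        exact ⟨mem_univ _, hx.2⟩)
    have h2 : ∀ y ∈ S, (D.filter (fun x => N x = y)).card = q + 1 := by
      intro y hy
      have heq : D.filter (fun x => N x = y) = univ.filter (fun x : Fq2 => N x = y) := by
        rw [hS, mem_filter] at hy
        ext x
        simp only [hD, Finset.filter_filter, mem_filter, mem_univ, true_and]
        constructor
        · exact fun h => h.2
        · intro h; exact ⟨by rw [h]; exact hy.2, h⟩
      rw [heq, hfiber y (hSne y hy)]
    rw [h1, Finset.sum_congr rfl h2, Finset.sum_const, smul_eq_mul]
  -- put everything together in ℕ
  have key : D.card * (2 * r) + q * (q + 1) = q * (q + 1) * r := by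
    calc D.card * (2 * r) + q * (q + 1)
        = (S.card * r) * (q + 1) * 2 + q * (q + 1) := by rw [hDcard]; ring
      _ = T.card * q * (q + 1) * 2 + q * (q + 1) := by rw [hScard]
      _ = q * (q + 1) * (T.card * 2 + 1) := by ring
      _ = q * (q + 1) * r := by rw [hTcard]
  -- cast to ℚ
  have hrq : (r : ℚ) = (p : ℚ) ^ t := by rw [hr]; push_cast; ring
  have hqq : (q : ℚ) = ((p : ℚ) ^ t) ^ s := by rw [hq]; push_cast; ring
  have h2r : (2 * (p : ℚ) ^ t) ≠ 0 := by
    have : (0 : ℚ) < p := by exact_mod_cast hp.pos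
    positivity
  rw [eq_div_iff h2r]
  have keyQ : (D.card : ℚ) * (2 * r) + q * (q + 1) = q * (q + 1) * r := by
    exact_mod_cast congrArg (Nat.cast : ℕ → ℚ) key
  rw [hrq, hqq] at keyQ
  linear_combination keyQ
end

section
/- Let ω = e^{2πi/p}. For every b ∈ F_r^* and every a ∈ F_{q^2}, Σ_{x∈F_{q^2}} ω^{Tr_{q/p}(b·x^{q+1}) + Tr_{q^2/p}(a·x)} = −q·ω^{−Tr_{q/p}(a^{q+1}·b^{−1})}. Moreover, for b = 0 and any a ∈ F_{q^2}^*, the sum Σ_{x∈F_{q^2}} ω^{Tr_{q^2/p}(a·x)} equals 0. -/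
/-!
Let `ψ` be the character `c ↦ ω ^ c` of `𝔽_p` composed with the trace of `𝔽_q`. By transitivity
of the trace the summand is `ψ (b N x + Tr_{q²/q} (a x))`, and `Tr_{q²/q} z = z + z ^ q`.
The shift `x = y - c` with `c = a ^ q / b` completes the square:
`b N (y - c) + Tr_{q²/q} (a (y - c)) = b N y - N a / b`.
What remains is `Σ_y ψ (b N y) = -q`: the norm has a single zero and `q + 1` points above every
nonzero value of `𝔽_q`, so `Σ_y f (N y) = (q + 1) Σ_u f u - q f 0` for every `f`.
The second claim is orthogonality for the nontrivial character `x ↦ ω ^ Tr (a x)`.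
-/

open Finset

theorem AddChar.IsPrimitive.compAddMonoidHom_trace {p : ℕ} [Fact p.Prime] {C : Type*}
    [CommMonoid C] {ψ : AddChar (ZMod p) C} (hψ : ψ.IsPrimitive) (F : Type*) [Field F]
    [Finite F] [Algebra (ZMod p) F] :
    (ψ.compAddMonoidHom (Algebra.trace (ZMod p) F).toAddMonoidHom).IsPrimitive := by
  intro a ha h
  obtain ⟨y, hy⟩ : ∃ y, Algebra.trace (ZMod p) F (a * y) ≠ 0 := by
    by_contra! h0
    exact ha ((traceForm_nondegenerate (ZMod p) F).1 a h0)
  exact hy ((hψ.zmod_char_eq_one_iff p _).1 (DFunLike.congr_fun h y))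

section QuadraticExtension

variable {K L : Type*} [Field K] [Fintype K] [Field L] [Fintype L] [Algebra K L]
  {N : L → K}

local notation "q" => Fintype.card K

theorem card_filter_norm_eq_le [DecidableEq K] (hN : ∀ x, algebraMap K L (N x) = x ^ (q + 1))
    (u : K) : #{y | N y = u} ≤ q + 1 := by
  classical
  calc #{y | N y = u}
      ≤ #(Polynomial.nthRoots (q + 1) (algebraMap K L u)).toFinset := by
        refine card_le_card fun y hy => ?_
        rw [Multiset.mem_toFinset, Polynomial.mem_nthRoots (Nat.succ_pos _), ← hN,
          (mem_filter.1 hy).2]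
    _ ≤ q + 1 := (Multiset.toFinset_card_le _).trans (Polynomial.card_nthRoots _ _)

theorem filter_norm_eq_zero [DecidableEq K] (hN : ∀ x, algebraMap K L (N x) = x ^ (q + 1)) :
    ({y | N y = 0} : Finset L) = {0} := by
  ext y
  rw [mem_filter, mem_singleton, ← (FaithfulSMul.algebraMap_injective K L).eq_iff, hN, map_zero,
    pow_eq_zero_iff (Nat.succ_ne_zero _)]
  simp

theorem card_filter_norm_eq_of_ne_zero [DecidableEq K] (hL : Fintype.card L = q ^ 2)
    (hN : ∀ x, algebraMap K L (N x) = x ^ (q + 1)) {u : K} (hu : u ≠ 0) :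
    #{y | N y = u} = q + 1 := by
  -- The nonzero fibres hold `q ^ 2 - 1 = (q - 1) * (q + 1)` points, each at most `q + 1`.
  have hsum : ∑ u ∈ univ.erase 0, #{y | N y = u} = ∑ _u ∈ univ.erase (0 : K), (q + 1) := by
    have htotal := (card_eq_sum_card_fiberwise (f := N) (s := univ) (t := univ)
      fun x _ => mem_univ (N x)).symm
    rw [← add_sum_erase _ _ (mem_univ 0), filter_norm_eq_zero hN, card_singleton, card_univ,
      hL] at htotal
    rw [sum_const, card_erase_of_mem (mem_univ 0), card_univ, smul_eq_mul]
    have hq : 1 ≤ q := Fintype.card_pos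
    zify [hq] at htotal ⊢
    linear_combination htotal
  exact (sum_eq_sum_iff_of_le fun u _ => card_filter_norm_eq_le hN u).1 hsum u
    (mem_erase.2 ⟨hu, mem_univ u⟩)

theorem sum_comp_norm {R : Type*} [CommRing R] (hL : Fintype.card L = q ^ 2)
    (hN : ∀ x, algebraMap K L (N x) = x ^ (q + 1)) (f : K → R) :
    ∑ y, f (N y) = (q + 1 : R) * ∑ u, f u - q * f 0 := by
  classical
  have hfibre : ∀ u, (#{y | N y = u} : R) * f u =
      (q + 1) * f u - if u = 0 then q * f 0 else 0 := by
    intro u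
    split_ifs with hu
    · subst hu; rw [filter_norm_eq_zero hN, card_singleton]; push_cast; ring
    · rw [card_filter_norm_eq_of_ne_zero hL hN hu]; push_cast; ring
  calc ∑ y, f (N y)
      = ∑ u, ∑ y with N y = u, f (N y) := (sum_fiberwise _ _ _).symm
    _ = ∑ u, (#{y | N y = u} : R) * f u := sum_congr rfl fun u _ => by
        rw [sum_congr rfl fun y hy => by rw [(mem_filter.1 hy).2], sum_const, nsmul_eq_mul]
    _ = (q + 1 : R) * ∑ u, f u - q * f 0 := by
        simp_rw [hfibre]
        rw [sum_sub_distrib, ← mul_sum, sum_ite_eq']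
        simp

theorem sum_addChar_norm {C : Type*} [CommRing C] [IsDomain C] (hL : Fintype.card L = q ^ 2)
    (hN : ∀ x, algebraMap K L (N x) = x ^ (q + 1)) {ψ : AddChar K C} (hψ : ψ ≠ 1) :
    ∑ y, ψ (N y) = -q := by
  rw [sum_comp_norm hL hN, AddChar.sum_eq_zero_of_ne_one hψ, AddChar.map_zero_eq_one]
  ring

theorem finrank_eq_two_of_card_eq_sq (hL : Fintype.card L = q ^ 2) : Module.finrank K L = 2 :=
  Nat.pow_right_injective Fintype.one_lt_card ((Module.card_eq_pow_finrank (K := K)).symm.trans hL)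

theorem algebraMap_trace_eq_add_pow (hL : Fintype.card L = q ^ 2) (z : L) :
    algebraMap K L (Algebra.trace K L z) = z + z ^ q := by
  rw [FiniteField.algebraMap_trace_eq_sum_pow, finrank_eq_two_of_card_eq_sq hL,
    Nat.card_eq_fintype_card]
  simp [sum_range_succ]

theorem mul_norm_sub_add_trace (hL : Fintype.card L = q ^ 2)
    (hN : ∀ x, algebraMap K L (N x) = x ^ (q + 1)) {B : K} (hB : B ≠ 0) (a y : L) :
    B * N (y - a ^ q * (algebraMap K L B)⁻¹) +
        Algebra.trace K L (a * (y - a ^ q * (algebraMap K L B)⁻¹)) = B * N y - N a * B⁻¹ := by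
  apply FaithfulSMul.algebraMap_injective K L
  have hβ : algebraMap K L B ≠ 0 := by simpa using hB
  have hβq : algebraMap K L B ^ q = algebraMap K L B := by rw [← map_pow, FiniteField.pow_card]
  have haq : (a ^ q) ^ q = a := by rw [← pow_mul, ← sq, ← hL, FiniteField.pow_card]
  have hfrob : ∀ z w : L, (z - w) ^ q = z ^ q - w ^ q := map_sub (FiniteField.frobeniusAlgHom K L)
  simp only [map_add, map_sub, map_mul, map_inv₀, hN, algebraMap_trace_eq_add_pow hL, pow_succ,
    mul_pow, hfrob, inv_pow, hβq, haq]
  field_simp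
  ring

theorem sum_addChar_norm_add_trace {C : Type*} [CommRing C] [IsDomain C]
    (hL : Fintype.card L = q ^ 2) (hN : ∀ x, algebraMap K L (N x) = x ^ (q + 1))
    {ψ : AddChar K C} (hψ : ψ ≠ 1) {B : K} (hB : B ≠ 0) (a : L) :
    ∑ x, ψ (B * N x + Algebra.trace K L (a * x)) = -q * ψ (-(N a * B⁻¹)) := by
  have hshift : ψ.mulShift B ≠ 1 := AddChar.IsPrimitive.of_ne_one hψ hB
  calc ∑ x, ψ (B * N x + Algebra.trace K L (a * x))
      = ∑ y, ψ (B * N y - N a * B⁻¹) := by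
        rw [← (Equiv.subRight (a ^ q * (algebraMap K L B)⁻¹)).sum_comp]
        exact sum_congr rfl fun y _ => congrArg ψ (mul_norm_sub_add_trace hL hN hB a y)
    _ = (∑ y, ψ.mulShift B (N y)) * ψ (-(N a * B⁻¹)) := by
        simp only [sub_eq_add_neg, AddChar.map_add_eq_mul, sum_mul, AddChar.mulShift_apply]
    _ = -q * ψ (-(N a * B⁻¹)) := by rw [sum_addChar_norm hL hN hshift]

end QuadraticExtension

theorem stmt12_general (p t s : ℕ) [Fact p.Prime]
    (Fr Fq Fq2 : Type) [Field Fr]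
    [Field Fq] [Fintype Fq] [Field Fq2] [Fintype Fq2]
    [Algebra (ZMod p) Fq] [Algebra (ZMod p) Fq2] [Algebra Fr Fq] [Algebra Fq Fq2]
    (hq : Fintype.card Fq = (p ^ t) ^ s)
    (hq2 : Fintype.card Fq2 = ((p ^ t) ^ s) ^ 2)
    (N : Fq2 → Fq) (hN : ∀ x : Fq2, algebraMap Fq Fq2 (N x) = x ^ (Fintype.card Fq + 1))
    (ω : ℂ) (hω : ω = Complex.exp (2 * Real.pi * Complex.I / (p : ℂ))) :
    (∀ b : Fr, b ≠ 0 → ∀ a : Fq2,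
      ∑ x : Fq2, ω ^ ((Algebra.trace (ZMod p) Fq (algebraMap Fr Fq b * N x) +
          Algebra.trace (ZMod p) Fq2 (a * x)).val) =
        -(((p : ℂ) ^ t) ^ s) *
          ω ^ ((-(Algebra.trace (ZMod p) Fq (N a * algebraMap Fr Fq b⁻¹))).val)) ∧
    (∀ a : Fq2, a ≠ 0 →
      ∑ x : Fq2, ω ^ ((Algebra.trace (ZMod p) Fq2 (a * x)).val) = 0) := by
  have hprim : IsPrimitiveRoot ω p := hω ▸ Complex.isPrimitiveRoot_exp p (NeZero.ne p)
  have hψ := AddChar.zmodChar_primitive_of_primitive_root p hprim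
  set ψ := AddChar.zmodChar p hprim.pow_eq_one
  have hL : Fintype.card Fq2 = Fintype.card Fq ^ 2 := by rw [hq, hq2]
  constructor
  · intro b hb a
    have hψq : ψ.compAddMonoidHom (Algebra.trace (ZMod p) Fq).toAddMonoidHom ≠ 1 := by
      simpa using hψ.compAddMonoidHom_trace Fq one_ne_zero
    have hB : algebraMap Fr Fq b ≠ 0 := (map_ne_zero _).2 hb
    convert sum_addChar_norm_add_trace hL hN hψq hB a using 1
    · simp [ψ, AddChar.zmodChar_apply, Algebra.trace_trace]
    · simp [ψ, AddChar.zmodChar_apply, hq]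
  · intro a ha
    classical
    simpa [ψ, AddChar.zmodChar_apply, ha, mul_comm] using
      AddChar.sum_mulShift a (hψ.compAddMonoidHom_trace Fq2)

/-- Let `ω = e^{2πi/p}`.  For every `b ∈ F_r^*` and every `a ∈ F_{q^2}`,
`Σ_{x∈F_{q^2}} ω^{Tr_{q/p}(b·x^{q+1}) + Tr_{q^2/p}(a·x)} = −q·ω^{−Tr_{q/p}(a^{q+1}·b^{−1})}`.
Moreover, for `b = 0` and any `a ∈ F_{q^2}^*`, `Σ_{x∈F_{q^2}} ω^{Tr_{q^2/p}(a·x)} = 0`.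
Here `N` records `N x = x^{q+1} ∈ F_q`, and for `c ∈ F_p = ZMod p` the power `ω^c` is
interpreted via the lift `c.val ∈ ℕ` (since `ω^p = 1`, this agrees with any lift). -/
theorem stmt12 (p t s : ℕ) [Fact p.Prime] (hp2 : Odd p) (ht : 0 < t) (hs : 0 < s)
    (Fr Fq Fq2 : Type) [Field Fr] [Fintype Fr]
    [Field Fq] [Fintype Fq] [Field Fq2] [Fintype Fq2]
    [Algebra (ZMod p) Fq] [Algebra (ZMod p) Fq2] [Algebra Fr Fq] [Algebra Fq Fq2]
    (hr : Fintype.card Fr = p ^ t) (hq : Fintype.card Fq = (p ^ t) ^ s)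
    (hq2 : Fintype.card Fq2 = ((p ^ t) ^ s) ^ 2)
    (N : Fq2 → Fq) (hN : ∀ x : Fq2, algebraMap Fq Fq2 (N x) = x ^ (Fintype.card Fq + 1))
    (ω : ℂ) (hω : ω = Complex.exp (2 * Real.pi * Complex.I / (p : ℂ))) :
    (∀ b : Fr, b ≠ 0 → ∀ a : Fq2,
      ∑ x : Fq2, ω ^ ((Algebra.trace (ZMod p) Fq (algebraMap Fr Fq b * N x) +
          Algebra.trace (ZMod p) Fq2 (a * x)).val) =
        -(((p : ℂ) ^ t) ^ s) *
          ω ^ ((-(Algebra.trace (ZMod p) Fq (N a * algebraMap Fr Fq b⁻¹))).val)) ∧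
    (∀ a : Fq2, a ≠ 0 →
      ∑ x : Fq2, ω ^ ((Algebra.trace (ZMod p) Fq2 (a * x)).val) = 0) :=
  stmt12_general p t s Fr Fq Fq2 hq hq2 N hN ω hω
end

section
/- For every a ∈ F_{q^2}^*, the sum P = Σ_{x∈F_{q^2}, Tr_{q/r}(x^{q+1})=0} χ(ax) satisfies: P = −q(r−1)/r if Tr_{q/r}(a^{q+1}) = 0, and P = q/r if Tr_{q/r}(a^{q+1}) ≠ 0. -/
open Finset

namespace Stmt13Aux

noncomputable def E (p : ℕ) (z : ZMod p) : ℂ :=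
  Complex.exp (2 * Real.pi * Complex.I / p) ^ z.val

variable {p : ℕ} [hp : Fact p.Prime]

lemma zeta_pow (p : ℕ) (v : ℕ) :
    Complex.exp (2 * Real.pi * Complex.I / p) ^ v
      = Complex.exp (2 * Real.pi * Complex.I * v / p) := by
  rw [← Complex.exp_nat_mul]
  ring_nf

omit hp in
lemma E_eq (z : ZMod p) : E p z = Complex.exp (2 * Real.pi * Complex.I * z.val / p) :=
  zeta_pow p z.val

lemma zeta_pow_p : Complex.exp (2 * Real.pi * Complex.I / p) ^ p = 1 := by
  rw [zeta_pow]
  have hp0 : (p : ℂ) ≠ 0 := Nat.cast_ne_zero.mpr hp.out.pos.ne'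
  rw [mul_div_assoc, div_self hp0, mul_one]
  exact Complex.exp_two_pi_mul_I

lemma E_zero : E p 0 = 1 := by
  simp [E, ZMod.val_zero]

lemma E_add (x y : ZMod p) : E p (x + y) = E p x * E p y := by
  have : NeZero p := ⟨hp.out.ne_zero⟩
  rw [E, E, E, ZMod.val_add, ← pow_add]
  conv_rhs => rw [pow_eq_pow_mod _ zeta_pow_p]

lemma E_ne_one {z : ZMod p} (hz : z ≠ 0) : E p z ≠ 1 := by
  have : NeZero p := ⟨hp.out.ne_zero⟩
  have h := Complex.isPrimitiveRoot_exp p hp.out.ne_zero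
  exact h.pow_ne_one_of_pos_of_lt
    (fun h0 => hz ((ZMod.val_eq_zero z).mp h0)) (ZMod.val_lt z)

lemma sum_E_comp_eq_zero {G : Type*} [AddCommGroup G] [Fintype G] (f : G →+ ZMod p)
    (hx : ∃ x, f x ≠ 0) : ∑ x : G, E p (f x) = 0 := by
  obtain ⟨x0, hx0⟩ := hx
  have key : ∑ x : G, E p (f x) = (∑ x : G, E p (f x)) * E p (f x0) := by
    calc ∑ x : G, E p (f x) = ∑ x : G, E p (f (x + x0)) :=
          (Fintype.sum_equiv (Equiv.addRight x0) _ _ (fun x => rfl)).symm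
    _ = (∑ x : G, E p (f x)) * E p (f x0) := by
          simp only [map_add, E_add, ← Finset.sum_mul]
  have h1 : (∑ x : G, E p (f x)) * (1 - E p (f x0)) = 0 := by
    rw [mul_sub, mul_one, ← key, sub_self]
  rcases mul_eq_zero.mp h1 with h | h
  · exact h
  · exact absurd (by linear_combination -h) (E_ne_one hx0)

lemma tr_nondeg (p : ℕ) [Fact p.Prime] (K : Type*) [Field K] [Fintype K] [Algebra (ZMod p) K]
    [CharP K p] {b : K} (hb : b ≠ 0) :
    ∃ x : K, Algebra.trace (ZMod p) K (b * x) ≠ 0 := by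
  have e : ringChar K = p := ringChar.eq K p
  subst e
  exact FiniteField.trace_to_zmod_nondegenerate K hb

lemma sum_E_trace (p : ℕ) [Fact p.Prime] (K : Type*) [Field K] [Fintype K] [Algebra (ZMod p) K]
    [CharP K p] {b : K} (hb : b ≠ 0) :
    ∑ x : K, E p (Algebra.trace (ZMod p) K (b * x)) = 0 := by
  obtain ⟨x0, h0⟩ := tr_nondeg p K hb
  exact sum_E_comp_eq_zero
    (((Algebra.trace (ZMod p) K).toAddMonoidHom).comp (AddMonoidHom.mulLeft b)) ⟨x0, h0⟩

lemma trace_frob (p : ℕ) [hp : Fact p.Prime] (K : Type*) [Field K] [Fintype K]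
    [Algebra (ZMod p) K] [CharP K p] (z : K) :
    Algebra.trace (ZMod p) K (z ^ p) = Algebra.trace (ZMod p) K z := by
  haveI : ExpChar K p := .prime hp.out
  let φ : K ≃ₐ[ZMod p] K := AlgEquiv.ofRingEquiv (f := frobeniusEquiv K p) (fun c => by
    show (algebraMap (ZMod p) K c) ^ p = algebraMap (ZMod p) K c
    rw [← map_pow, ZMod.pow_card])
  have := Algebra.trace_eq_of_algEquiv φ z
  rwa [show φ z = z ^ p from rfl] at this

lemma trace_frob_pow (p : ℕ) [hp : Fact p.Prime] (K : Type*) [Field K] [Fintype K]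
    [Algebra (ZMod p) K] [CharP K p] (k : ℕ) (z : K) :
    Algebra.trace (ZMod p) K (z ^ p ^ k) = Algebra.trace (ZMod p) K z := by
  induction k with
  | zero => simp
  | succ n ih => rw [pow_succ, pow_mul, trace_frob, ih]

lemma fiber_card {Fq Fq2 : Type*} [Field Fq] [Fintype Fq] [DecidableEq Fq]
    [Field Fq2] [Fintype Fq2] [DecidableEq Fq2] [Algebra Fq Fq2]
    (hcard : Fintype.card Fq2 = Fintype.card Fq ^ 2)
    (N : Fq2 → Fq) (hN : ∀ x, algebraMap Fq Fq2 (N x) = x ^ (Fintype.card Fq + 1)) :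
    ∀ u : Fq, u ≠ 0 →
      (univ.filter fun y : Fq2 => N y = u).card = Fintype.card Fq + 1 := by
  set q := Fintype.card Fq with hqdef
  have inj : Function.Injective (algebraMap Fq Fq2) := (algebraMap Fq Fq2).injective
  have hbound : ∀ u : Fq, (univ.filter fun y : Fq2 => N y = u).card ≤ q + 1 := by
    intro u
    have hsub : (univ.filter fun y : Fq2 => N y = u) ⊆
        (Polynomial.nthRoots (q + 1) (algebraMap Fq Fq2 u)).toFinset := by
      intro y hy
      rw [mem_filter] at hy
      rw [Multiset.mem_toFinset, Polynomial.mem_nthRoots (Nat.succ_pos q)]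
      rw [← hy.2, hN]
    calc (univ.filter fun y : Fq2 => N y = u).card
        ≤ (Polynomial.nthRoots (q + 1) (algebraMap Fq Fq2 u)).toFinset.card :=
          Finset.card_le_card hsub
      _ ≤ Multiset.card (Polynomial.nthRoots (q + 1) (algebraMap Fq Fq2 u)) :=
          Multiset.toFinset_card_le _
      _ ≤ q + 1 := Polynomial.card_nthRoots _ _
  have hzero : ∀ y : Fq2, N y = 0 ↔ y = 0 := by
    intro y
    constructor
    · intro h
      have : algebraMap Fq Fq2 (N y) = 0 := by rw [h, map_zero]
      rw [hN] at this
      exact pow_eq_zero_iff (Nat.succ_ne_zero q) |>.mp this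
    · rintro rfl
      apply inj
      rw [hN, map_zero, zero_pow (Nat.succ_ne_zero q)]
  have hfib0 : (univ.filter fun y : Fq2 => N y = 0).card = 1 := by
    have : (univ.filter fun y : Fq2 => N y = 0) = {0} := by
      ext y; simp [hzero y]
    rw [this, Finset.card_singleton]
  have htotal : ∑ u : Fq, (univ.filter fun y : Fq2 => N y = u).card = q ^ 2 := by
    rw [← hcard, ← Finset.card_univ (α := Fq2)]
    exact (Finset.card_eq_sum_card_fiberwise (fun x _ => Finset.mem_univ (N x))).symm
  obtain ⟨m, hm⟩ : ∃ m, q = m + 1 := ⟨q - 1, (Nat.succ_pred_eq_of_pos Fintype.card_pos).symm⟩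
  have herase : #(filter (fun y : Fq2 => N y = 0) univ)
      + ∑ u ∈ univ.erase (0 : Fq), #(filter (fun y : Fq2 => N y = u) univ) = q ^ 2 := by
    rw [Finset.add_sum_erase univ (fun u : Fq => #(filter (fun y : Fq2 => N y = u) univ))
      (Finset.mem_univ 0)]
    exact htotal
  intro u hu
  by_contra hne
  have hlt : #(filter (fun y : Fq2 => N y = u) univ) < q + 1 :=
    lt_of_le_of_ne (hbound u) hne
  have hsumlt : ∑ v ∈ univ.erase (0 : Fq), #(filter (fun y : Fq2 => N y = v) univ)
      < ∑ _v ∈ univ.erase (0 : Fq), (q + 1) :=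
    Finset.sum_lt_sum (fun v _ => hbound v) ⟨u, Finset.mem_erase.mpr ⟨hu, Finset.mem_univ u⟩, hlt⟩
  rw [Finset.sum_const, Finset.card_erase_of_mem (Finset.mem_univ 0), Finset.card_univ,
    smul_eq_mul, ← hqdef, hm] at hsumlt
  simp only [Nat.add_sub_cancel] at hsumlt
  rw [hfib0, hm] at herase
  nlinarith [herase, hsumlt]

end Stmt13Aux

open Stmt13Aux

/-- For every `a ∈ F_{q^2}^*`, the sum
`P = Σ_{x∈F_{q^2}, Tr_{q/r}(x^{q+1})=0} χ(ax)` satisfies: `P = −q(r−1)/r` if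
`Tr_{q/r}(a^{q+1}) = 0`, and `P = q/r` if `Tr_{q/r}(a^{q+1}) ≠ 0`.  Here `N` records
`N x = x^{q+1} ∈ F_q` and `χ` is the canonical additive character of `F_{q^2}`. -/
theorem stmt13 (p t s : ℕ) [Fact p.Prime] (hp2 : Odd p) (ht : 0 < t) (hs : 0 < s)
    (Fr Fq Fq2 : Type) [Field Fr] [Fintype Fr] [DecidableEq Fr]
    [Field Fq] [Fintype Fq] [Field Fq2] [Fintype Fq2] [DecidableEq Fq2]
    [Algebra (ZMod p) Fq2] [Algebra Fr Fq] [Algebra Fq Fq2]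
    (hr : Fintype.card Fr = p ^ t) (hq : Fintype.card Fq = (p ^ t) ^ s)
    (hq2 : Fintype.card Fq2 = ((p ^ t) ^ s) ^ 2)
    (N : Fq2 → Fq) (hN : ∀ x : Fq2, algebraMap Fq Fq2 (N x) = x ^ (Fintype.card Fq + 1))
    (χ : Fq2 → ℂ)
    (hχ : ∀ x : Fq2, χ x = Complex.exp (2 * Real.pi * Complex.I *
      ((Algebra.trace (ZMod p) Fq2 x).val : ℂ) / (p : ℂ))) :
    ∀ a : Fq2, a ≠ 0 →
      (Algebra.trace Fr Fq (N a) = 0 →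
        ∑ x ∈ Finset.univ.filter (fun x : Fq2 => Algebra.trace Fr Fq (N x) = 0),
            χ (a * x) =
          -(((p : ℂ) ^ t) ^ s * ((p : ℂ) ^ t - 1) / ((p : ℂ) ^ t))) ∧
      (Algebra.trace Fr Fq (N a) ≠ 0 →
        ∑ x ∈ Finset.univ.filter (fun x : Fq2 => Algebra.trace Fr Fq (N x) = 0),
            χ (a * x) =
          ((p : ℂ) ^ t) ^ s / ((p : ℂ) ^ t)) := by
  classical
  intro a ha
  -- basic instances
  haveI charFq2 : CharP Fq2 p :=
    charP_of_injective_algebraMap (algebraMap (ZMod p) Fq2).injective p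
  haveI charFq : CharP Fq p := (algebraMap Fq Fq2).charP (algebraMap Fq Fq2).injective p
  haveI charFr : CharP Fr p := (algebraMap Fr Fq).charP (algebraMap Fr Fq).injective p
  letI : Algebra (ZMod p) Fq := ZMod.algebra Fq p
  letI : Algebra (ZMod p) Fr := ZMod.algebra Fr p
  haveI : IsScalarTower (ZMod p) Fq Fq2 :=
    IsScalarTower.of_algebraMap_eq' (RingHom.ext_zmod _ _)
  haveI : IsScalarTower (ZMod p) Fr Fq :=
    IsScalarTower.of_algebraMap_eq' (RingHom.ext_zmod _ _)
  set q := Fintype.card Fq with hqdef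
  set r := Fintype.card Fr with hrdef
  have hq1 : 1 < q := Fintype.one_lt_card
  have hcard2 : Fintype.card Fq2 = q ^ 2 := by rw [hq2, hq]
  have hqp : q = p ^ (t * s) := by rw [hq, ← pow_mul]
  -- the trace relation Tr_{Fq2/p}(algebraMap y) = Tr_{Fq/p}(2y)
  have hrank : Module.finrank Fq Fq2 = 2 := by
    have h := Module.card_eq_pow_finrank (K := Fq) (V := Fq2)
    rw [hcard2] at h
    exact (Nat.pow_right_injective hq1 h.symm)
  have htr2 : ∀ y : Fq, Algebra.trace (ZMod p) Fq2 (algebraMap Fq Fq2 y)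
      = Algebra.trace (ZMod p) Fq (2 * y) := by
    intro y
    rw [← Algebra.trace_trace (S := Fq), Algebra.trace_algebraMap, hrank]
    congr 1
    rw [nsmul_eq_mul]
    norm_num
  have htrq : ∀ z : Fq2, Algebra.trace (ZMod p) Fq2 (z ^ q) = Algebra.trace (ZMod p) Fq2 z := by
    intro z
    rw [hqp]
    exact trace_frob_pow p Fq2 (t * s) z
  have hpowq2 : ∀ z : Fq2, z ^ (q * q) = z := by
    intro z
    have := FiniteField.pow_card z
    rwa [hcard2, pow_two] at this
  have halg_pow : ∀ u : Fq, (algebraMap Fq Fq2 u) ^ q = algebraMap Fq Fq2 u := by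
    intro u
    rw [← map_pow, FiniteField.pow_card]
  -- the character
  set ch : Fq2 → ℂ := fun z => E p (Algebra.trace (ZMod p) Fq2 z) with hch
  have hχ_ch : ∀ z : Fq2, χ z = ch z := fun z => by rw [hχ, hch]; exact (E_eq _).symm
  have ch_add : ∀ z w : Fq2, ch (z + w) = ch z * ch w := by
    intro z w; simp only [hch, map_add, E_add]
  have ch_zero : ch 0 = 1 := by simp only [hch, map_zero, E_zero]
  -- 2 is invertible
  have hpne2 : p ≠ 2 := by
    rintro rfl
    exact (Nat.not_odd_iff_even.mpr even_two) hp2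
  have two_ne : (2 : Fq) ≠ 0 := by
    intro h
    rw [show (2 : Fq) = ((2 : ℕ) : Fq) by norm_num, CharP.cast_eq_zero_iff Fq p] at h
    exact hpne2 ((Nat.prime_dvd_prime_iff_eq Fact.out Nat.prime_two).mp h)
  have hlin : ∀ (l : Fr) (y : Fq), Algebra.trace Fr Fq (algebraMap Fr Fq l * y)
      = l * Algebra.trace Fr Fq y := by
    intro l y
    rw [← Algebra.smul_def, map_smul, smul_eq_mul]
  have htrtr : ∀ y : Fq, Algebra.trace (ZMod p) Fq y
      = Algebra.trace (ZMod p) Fr (Algebra.trace Fr Fq y) := fun y =>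
    (Algebra.trace_trace (R := ZMod p) (S := Fr) (T := Fq) y).symm
  have key1 : ∀ c : Fr, (∑ l : Fr, E p (Algebra.trace (ZMod p) Fr (l * c)))
      = if c = 0 then (r : ℂ) else 0 := by
    intro c
    by_cases hc : c = 0
    · subst hc
      simp only [mul_zero, map_zero, E_zero, Finset.sum_const, Finset.card_univ,
        nsmul_eq_mul, mul_one, if_pos]
      rfl
    · rw [if_neg hc]
      have h := sum_E_trace p Fr (b := c) hc
      rw [← h]
      apply Finset.sum_congr rfl
      intro l _
      rw [mul_comm]
  set A : Fr → Fq2 := fun l => algebraMap Fq Fq2 (algebraMap Fr Fq l * (2 : Fq)⁻¹) with hA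
  have pointwise1 : ∀ (l : Fr) (x : Fq2),
      E p (Algebra.trace (ZMod p) Fr (l * Algebra.trace Fr Fq (N x))) * ch (a * x)
      = ch (A l * x ^ (q + 1) + a * x) := by
    intro l x
    rw [ch_add]
    congr 1
    have hx : A l * x ^ (q + 1) = algebraMap Fq Fq2 (algebraMap Fr Fq l * (2 : Fq)⁻¹ * N x) := by
      rw [map_mul, ← hN, hA]
    rw [hx]
    simp only [hch]
    congr 1
    rw [htr2]
    have h2 : (2 : Fq) * (algebraMap Fr Fq l * (2 : Fq)⁻¹ * N x)
        = algebraMap Fr Fq l * N x := by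
      field_simp
    rw [h2, htrtr, hlin]
  set P := ∑ x ∈ Finset.univ.filter (fun x : Fq2 => Algebra.trace Fr Fq (N x) = 0), χ (a * x)
    with hP
  have step1 : (r : ℂ) * P = ∑ l : Fr, ∑ x : Fq2, ch (A l * x ^ (q + 1) + a * x) := by
    calc (r : ℂ) * P
        = ∑ x : Fq2, (if Algebra.trace Fr Fq (N x) = 0 then (r : ℂ) else 0) * ch (a * x) := by
          rw [hP, Finset.mul_sum, Finset.sum_filter]
          apply Finset.sum_congr rfl
          intro x _
          split_ifs
          · rw [hχ_ch]
          · rw [zero_mul]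
      _ = ∑ x : Fq2, (∑ l : Fr, E p (Algebra.trace (ZMod p) Fr
            (l * Algebra.trace Fr Fq (N x)))) * ch (a * x) := by
          apply Finset.sum_congr rfl
          intro x _
          rw [key1]
      _ = ∑ x : Fq2, ∑ l : Fr, E p (Algebra.trace (ZMod p) Fr
            (l * Algebra.trace Fr Fq (N x))) * ch (a * x) := by
          apply Finset.sum_congr rfl
          intro x _
          rw [Finset.sum_mul]
      _ = ∑ l : Fr, ∑ x : Fq2, E p (Algebra.trace (ZMod p) Fr
            (l * Algebra.trace Fr Fq (N x))) * ch (a * x) := Finset.sum_comm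
      _ = ∑ l : Fr, ∑ x : Fq2, ch (A l * x ^ (q + 1) + a * x) := by
          apply Finset.sum_congr rfl
          intro l _
          exact Finset.sum_congr rfl fun x _ => pointwise1 l x
  have A0 : A 0 = 0 := by
    rw [hA]
    simp
  have step2 : ∑ x : Fq2, ch (A 0 * x ^ (q + 1) + a * x) = 0 := by
    simp only [A0, zero_mul, zero_add]
    have h := sum_E_trace p Fq2 (b := a) ha
    rw [← h]
  -- The Weil-sum evaluation for a nonzero multiplier l
  have step3 : ∀ l : Fr, l ≠ 0 → ∑ x : Fq2, ch (A l * x ^ (q + 1) + a * x)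
      = -(q : ℂ) * E p (Algebra.trace (ZMod p) Fr
          (l⁻¹ * (-(Algebra.trace Fr Fq (N a))))) := by
    intro l hl
    set l' : Fq := algebraMap Fr Fq l with hl'def
    have hl' : l' ≠ 0 := by
      rw [hl'def]
      exact fun h => hl ((algebraMap Fr Fq).injective (by rw [h, map_zero]))
    set α : Fq2 := A l with hαdef
    have hαeq : α = algebraMap Fq Fq2 (l' * (2 : Fq)⁻¹) := by rw [hαdef, hA]
    have hAL0 : algebraMap Fq Fq2 l' ≠ 0 :=
      fun h => hl' ((algebraMap Fq Fq2).injective (by rw [h, map_zero]))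
    have h2Fq2 : (2 : Fq2) = algebraMap Fq Fq2 (2 : Fq) := by
      rw [map_ofNat]
    have two_ne2 : (2 : Fq2) ≠ 0 := by
      rw [h2Fq2]
      exact fun h => two_ne ((algebraMap Fq Fq2).injective (by rw [h, map_zero]))
    have hα0 : α ≠ 0 := by
      rw [hαeq]
      exact fun h => (mul_ne_zero hl' (inv_ne_zero two_ne))
        ((algebraMap Fq Fq2).injective (by rw [h, map_zero]))
    have hαq : α ^ q = α := by rw [hαeq]; exact halg_pow _
    set c : Fq2 := (a * (algebraMap Fq Fq2 l')⁻¹) ^ q with hcdef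
    have hcq : c ^ q = a * (algebraMap Fq Fq2 l')⁻¹ := by
      rw [hcdef, ← pow_mul, hpowq2]
    have hfrobch : ∀ z : Fq2, ch (z ^ q) = ch z := fun z => by simp only [hch, htrq]
    have hswap : ∀ x : Fq2, ch (α * (c * x ^ q)) = ch (α * (c ^ q * x)) := by
      intro x
      rw [← hfrobch (α * (c ^ q * x))]
      congr 1
      rw [mul_pow, mul_pow, ← pow_mul, hpowq2, hαq]
    have hkey : ∀ x : Fq2, ch (α * (x + c) ^ (q + 1))
        = ch (α * x ^ (q + 1) + a * x) * ch (α * c ^ (q + 1)) := by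
      intro x
      have hfrob : (x + c) ^ q = x ^ q + c ^ q := by
        rw [hqp]; exact add_pow_char_pow x c p (t * s)
      have hexp : α * (x + c) ^ (q + 1)
          = α * x ^ (q + 1) + (α * (c ^ q * x) + (α * (c * x ^ q) + α * c ^ (q + 1))) := by
        rw [pow_succ, hfrob]
        ring
      rw [hexp, ch_add, ch_add, ch_add, hswap]
      have h2 : α * (c ^ q * x) + α * (c ^ q * x) = a * x := by
        have hc2 : (2 : Fq2) * α * c ^ q = a := by
          rw [hcq, hαeq, h2Fq2, ← map_mul]
          have harg : (2 : Fq) * (l' * (2 : Fq)⁻¹) = l' := by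
            field_simp
          rw [harg]
          field_simp
        calc α * (c ^ q * x) + α * (c ^ q * x) = ((2 : Fq2) * α * c ^ q) * x := by ring
          _ = a * x := by rw [hc2]
      calc ch (α * x ^ (q + 1)) * (ch (α * (c ^ q * x)) * (ch (α * (c ^ q * x))
              * ch (α * c ^ (q + 1))))
          = (ch (α * x ^ (q + 1)) * (ch (α * (c ^ q * x)) * ch (α * (c ^ q * x))))
              * ch (α * c ^ (q + 1)) := by ring
        _ = (ch (α * x ^ (q + 1)) * ch (a * x)) * ch (α * c ^ (q + 1)) := by
            rw [← ch_add, h2]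
        _ = ch (α * x ^ (q + 1) + a * x) * ch (α * c ^ (q + 1)) := by rw [← ch_add]
    have hsum1 : ∑ x : Fq2, ch (α * (x + c) ^ (q + 1)) = ∑ y : Fq2, ch (α * y ^ (q + 1)) :=
      Fintype.sum_equiv (Equiv.addRight c) _ _ (fun x => rfl)
    have hFsum : ∑ u : Fq, ch (α * algebraMap Fq Fq2 u) = 0 := by
      have h := sum_E_trace p Fq (b := l') hl'
      rw [← h]
      apply Finset.sum_congr rfl
      intro u _
      rw [hαeq, ← map_mul]
      simp only [hch]
      congr 1
      rw [htr2]
      congr 1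
      field_simp
    have hzero : ∀ y : Fq2, N y = 0 ↔ y = 0 := by
      intro y
      constructor
      · intro h
        have h' : algebraMap Fq Fq2 (N y) = 0 := by rw [h, map_zero]
        rw [hN] at h'
        exact pow_eq_zero_iff (Nat.succ_ne_zero q) |>.mp h'
      · rintro rfl
        apply (algebraMap Fq Fq2).injective
        rw [hN, map_zero, zero_pow (Nat.succ_ne_zero q)]
    have hfib0 : (univ.filter fun y : Fq2 => N y = 0).card = 1 := by
      have he : (univ.filter fun y : Fq2 => N y = 0) = {0} := by
        ext y; simp [hzero y]
      rw [he, Finset.card_singleton]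
    have hG : ∑ y : Fq2, ch (α * y ^ (q + 1)) = -(q : ℂ) := by
      have hfib := fiber_card hcard2 N hN
      have hcalc : ∑ y : Fq2, ch (α * y ^ (q + 1))
          = ∑ u : Fq, ((univ.filter fun y : Fq2 => N y = u).card : ℂ)
              * ch (α * algebraMap Fq Fq2 u) := by
        calc ∑ y : Fq2, ch (α * y ^ (q + 1))
            = ∑ y : Fq2, ch (α * algebraMap Fq Fq2 (N y)) := by
              apply Finset.sum_congr rfl; intro y _; rw [hN]
          _ = ∑ u : Fq, ∑ y ∈ univ.filter (fun y : Fq2 => N y = u),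
                ch (α * algebraMap Fq Fq2 (N y)) :=
              (Finset.sum_fiberwise_of_maps_to (fun y _ => Finset.mem_univ (N y)) _).symm
          _ = ∑ u : Fq, ((univ.filter fun y : Fq2 => N y = u).card : ℂ)
                * ch (α * algebraMap Fq Fq2 u) := by
              apply Finset.sum_congr rfl
              intro u _
              rw [Finset.sum_congr rfl (fun y hy => by rw [(Finset.mem_filter.mp hy).2]),
                Finset.sum_const, nsmul_eq_mul]
      rw [hcalc, ← Finset.add_sum_erase _ _ (Finset.mem_univ (0 : Fq))]
      have herase_val : ∑ u ∈ univ.erase (0 : Fq),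
          ((univ.filter fun y : Fq2 => N y = u).card : ℂ) * ch (α * algebraMap Fq Fq2 u)
          = ((q : ℂ) + 1) * ∑ u ∈ univ.erase (0 : Fq), ch (α * algebraMap Fq Fq2 u) := by
        rw [Finset.mul_sum]
        apply Finset.sum_congr rfl
        intro u hu
        rw [hfib u (Finset.mem_erase.mp hu).1]
        push_cast
        ring
      have herase_sum : ∑ u ∈ univ.erase (0 : Fq), ch (α * algebraMap Fq Fq2 u) = -1 := by
        have h0 := Finset.add_sum_erase univ (fun u : Fq => ch (α * algebraMap Fq Fq2 u))
          (Finset.mem_univ (0 : Fq))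
        rw [hFsum] at h0
        have hv0 : ch (α * algebraMap Fq Fq2 (0 : Fq)) = 1 := by
          rw [map_zero, mul_zero, ch_zero]
        simp only [hv0] at h0
        linear_combination h0
      have hv0 : ch (α * algebraMap Fq Fq2 (0 : Fq)) = 1 := by
        rw [map_zero, mul_zero, ch_zero]
      rw [herase_val, herase_sum]
      beta_reduce
      rw [hfib0, hv0]
      push_cast
      ring
    have hS : (∑ x : Fq2, ch (α * x ^ (q + 1) + a * x)) * ch (α * c ^ (q + 1)) = -(q : ℂ) := by
      calc (∑ x : Fq2, ch (α * x ^ (q + 1) + a * x)) * ch (α * c ^ (q + 1))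
          = ∑ x : Fq2, ch (α * x ^ (q + 1) + a * x) * ch (α * c ^ (q + 1)) :=
            by rw [Finset.sum_mul]
        _ = ∑ x : Fq2, ch (α * (x + c) ^ (q + 1)) := by
            apply Finset.sum_congr rfl
            intro x _
            rw [hkey]
        _ = ∑ y : Fq2, ch (α * y ^ (q + 1)) := hsum1
        _ = -(q : ℂ) := hG
    have hNa : algebraMap Fq Fq2 (N a) = a ^ q * a := by rw [hN, pow_succ]
    have hc_eq : c = a ^ q * algebraMap Fq Fq2 l'⁻¹ := by
      rw [hcdef, mul_pow, ← map_inv₀, ← map_pow, FiniteField.pow_card]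
    have hw : α * c ^ (q + 1) = algebraMap Fq Fq2 (N a * (2 : Fq)⁻¹ * l'⁻¹) := by
      rw [pow_succ, mul_comm (c ^ q) c, hcq, hc_eq, hαeq]
      simp only [map_mul, map_inv₀]
      rw [hNa, ← h2Fq2]
      field_simp
      try ring
    have hinv : ch (α * c ^ (q + 1)) * ch (-(α * c ^ (q + 1))) = 1 := by
      rw [← ch_add, add_neg_cancel, ch_zero]
    have hchneg : ch (-(α * c ^ (q + 1)))
        = E p (Algebra.trace (ZMod p) Fr (l⁻¹ * (-(Algebra.trace Fr Fq (N a))))) := by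
      rw [hw, ← map_neg]
      simp only [hch]
      congr 1
      rw [htr2]
      have harg : (2 : Fq) * -(N a * (2 : Fq)⁻¹ * l'⁻¹)
          = algebraMap Fr Fq l⁻¹ * (-(N a)) := by
        rw [hl'def, ← map_inv₀]
        field_simp
      rw [harg, htrtr, hlin, map_neg]
    calc ∑ x : Fq2, ch (A l * x ^ (q + 1) + a * x)
        = (∑ x : Fq2, ch (α * x ^ (q + 1) + a * x))
            * (ch (α * c ^ (q + 1)) * ch (-(α * c ^ (q + 1)))) := by
          rw [hinv, mul_one, hαdef]
      _ = ((∑ x : Fq2, ch (α * x ^ (q + 1) + a * x)) * ch (α * c ^ (q + 1)))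
            * ch (-(α * c ^ (q + 1))) := by ring
      _ = -(q : ℂ) * ch (-(α * c ^ (q + 1))) := by rw [hS]
      _ = -(q : ℂ) * E p (Algebra.trace (ZMod p) Fr
            (l⁻¹ * (-(Algebra.trace Fr Fq (N a))))) := by rw [hchneg]
  -- assemble
  have step4 : (r : ℂ) * P = ∑ l ∈ univ.erase (0 : Fr),
      (-(q : ℂ) * E p (Algebra.trace (ZMod p) Fr
        (l⁻¹ * (-(Algebra.trace Fr Fq (N a)))))) := by
    rw [step1, ← Finset.add_sum_erase _ _ (Finset.mem_univ (0 : Fr)), step2, zero_add]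
    exact Finset.sum_congr rfl (fun l hl => step3 l (Finset.mem_erase.mp hl).1)
  have hr1 : 1 ≤ r := Fintype.card_pos
  have hrC : (r : ℂ) = (p : ℂ) ^ t := by rw [hr]; push_cast; ring
  have hqC : (q : ℂ) = ((p : ℂ) ^ t) ^ s := by rw [hq]; push_cast; ring
  have hR0 : ((p : ℂ) ^ t) ≠ 0 := pow_ne_zero _ (Nat.cast_ne_zero.mpr (Fact.out : p.Prime).pos.ne')
  constructor
  · intro hT
    have hval : ∀ l ∈ univ.erase (0 : Fr),
        -(q : ℂ) * E p (Algebra.trace (ZMod p) Fr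
          (l⁻¹ * (-(Algebra.trace Fr Fq (N a))))) = -(q : ℂ) := by
      intro l _
      rw [hT, neg_zero, mul_zero, map_zero, E_zero, mul_one]
    rw [Finset.sum_congr rfl hval, Finset.sum_const,
      Finset.card_erase_of_mem (Finset.mem_univ 0), Finset.card_univ, ← hrdef,
      nsmul_eq_mul] at step4
    have hcast : ((r - 1 : ℕ) : ℂ) = (r : ℂ) - 1 := by
      push_cast [Nat.cast_sub hr1]
      ring
    rw [hcast] at step4
    have hr0' : (r : ℂ) ≠ 0 := by rw [hrC]; exact hR0
    rw [← hqC, ← hrC, ← neg_div, eq_div_iff hr0']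
    linear_combination step4
  · intro hT
    have hbij : ∑ l ∈ univ.erase (0 : Fr), E p (Algebra.trace (ZMod p) Fr
        (l⁻¹ * (-(Algebra.trace Fr Fq (N a)))))
        = ∑ m ∈ univ.erase (0 : Fr), E p (Algebra.trace (ZMod p) Fr m) := by
      have hT' : -(Algebra.trace Fr Fq (N a)) ≠ 0 := neg_ne_zero.mpr hT
      refine Finset.sum_nbij' (i := fun l : Fr => l⁻¹ * (-(Algebra.trace Fr Fq (N a))))
        (j := fun m : Fr => m⁻¹ * (-(Algebra.trace Fr Fq (N a)))) ?_ ?_ ?_ ?_ ?_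
      · intro l hl
        exact Finset.mem_erase.mpr ⟨mul_ne_zero
          (inv_ne_zero (Finset.mem_erase.mp hl).1) hT', Finset.mem_univ _⟩
      · intro m hm
        exact Finset.mem_erase.mpr ⟨mul_ne_zero
          (inv_ne_zero (Finset.mem_erase.mp hm).1) hT', Finset.mem_univ _⟩
      · intro l hl
        field_simp
      · intro m hm
        field_simp
      · intro l _
        rfl
    have hsum0 : ∑ m : Fr, E p (Algebra.trace (ZMod p) Fr m) = 0 := by
      have h := sum_E_trace p Fr (b := (1 : Fr)) one_ne_zero
      rw [← h]
      apply Finset.sum_congr rfl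
      intro m _
      rw [one_mul]
    have herase : ∑ m ∈ univ.erase (0 : Fr), E p (Algebra.trace (ZMod p) Fr m) = -1 := by
      have h0 := Finset.add_sum_erase univ (fun m : Fr => E p (Algebra.trace (ZMod p) Fr m))
        (Finset.mem_univ (0 : Fr))
      simp only [map_zero, E_zero] at h0
      rw [hsum0] at h0
      linear_combination h0
    rw [← Finset.mul_sum, hbij, herase] at step4
    have hr0' : (r : ℂ) ≠ 0 := by rw [hrC]; exact hR0
    rw [← hqC, ← hrC, eq_div_iff hr0']
    linear_combination step4
end
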